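/- Let p and q be orthogonal projections on a complex Hilbert space H with ‖p − q‖ ≤ δ for some real number δ < 1, and set t = p q. Then there exists a bounded operator v on H such that v* v = q, v v* = p, t = v · √(t* t), and ‖v − t‖ ≤ δ. -/

import Mathlib

set_option synthInstance.maxHeartbeats 1000000
set_option maxHeartbeats 2000000

open ContinuousLinearMap in
/-- If `p`, `q` are orthogonal projections on a complex Hilbert space with
`‖p − q‖ ≤ δ < 1` and `t = pq`, then the phase `v` of the polar decomposition
`t = v·√(t*t)` satisfies `v*v = q`, `vv* = p` and `‖v − t‖ ≤ δ`. -/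
theorem stmt_5 {H : Type*} [NormedAddCommGroup H] [InnerProductSpace ℂ H]
    [CompleteSpace H] (p q : H →L[ℂ] H)
    (hp_sa : IsSelfAdjoint p) (hp_idem : p * p = p)
    (hq_sa : IsSelfAdjoint q) (hq_idem : q * q = q)
    (δ : ℝ) (hδ : δ < 1) (hdist : ‖p - q‖ ≤ δ) :
    ∃ v : H →L[ℂ] H, adjoint v * v = q ∧ v * adjoint v = p ∧
      p * q = v * CFC.sqrt (adjoint (p * q) * (p * q)) ∧ ‖v - p * q‖ ≤ δ := by
  have hp_star : star p = p := hp_sa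
  have hq_star : star q = q := hq_sa
  have hδ0 : (0:ℝ) ≤ δ := le_trans (norm_nonneg _) hdist
  have hqn : ‖q‖ ≤ 1 := by
    have h1 : ‖q‖ * ‖q‖ = ‖q‖ := by
      rw [← CStarRing.norm_star_mul_self (x := q), hq_star, hq_idem]
    nlinarith [norm_nonneg q]
  have hpn : ‖p‖ ≤ 1 := by
    have h1 : ‖p‖ * ‖p‖ = ‖p‖ := by
      rw [← CStarRing.norm_star_mul_self (x := p), hp_star, hp_idem]
    nlinarith [norm_nonneg p]
  set a : H →L[ℂ] H := q * p * q with ha_def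
  have hA : adjoint (p * q) * (p * q) = a := by
    rw [← ContinuousLinearMap.star_eq_adjoint, star_mul, hp_star, hq_star, ha_def]
    rw [mul_assoc, ← mul_assoc p p q, hp_idem, ← mul_assoc]
  have ha_nonneg : 0 ≤ a := by
    rw [← hA, ← ContinuousLinearMap.star_eq_adjoint]
    exact star_mul_self_nonneg _
  have ha_norm : ‖a‖ ≤ 1 := by
    calc ‖q * p * q‖ ≤ ‖q * p‖ * ‖q‖ := norm_mul_le _ _
      _ ≤ (‖q‖ * ‖p‖) * ‖q‖ := by gcongr; exact norm_mul_le _ _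
      _ ≤ 1 := by nlinarith [norm_nonneg p, norm_nonneg q, mul_nonneg (norm_nonneg q) (norm_nonneg p)]
  have haq : a * q = a := by rw [ha_def, mul_assoc, hq_idem]
  have hqa : q * a = a := by rw [ha_def, ← mul_assoc, ← mul_assoc, hq_idem]
  set u : H →L[ℂ] H := CFC.sqrt a with hu_def
  have hu_nonneg : 0 ≤ u := CFC.sqrt_nonneg a
  have hu_mul : u * u = a := CFC.sqrt_mul_sqrt_self a ha_nonneg
  have hu_sa : IsSelfAdjoint u := .of_nonneg hu_nonneg
  have hu_star : star u = u := hu_sa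
  -- u * q = u
  have huq : u * q = u := by
    have hx : star (u * (1 - q)) * (u * (1 - q)) = 0 := by
      rw [star_mul, star_sub, star_one, hq_star, hu_star]
      calc (1 - q) * u * (u * (1 - q)) = (1 - q) * (u * u) * (1 - q) := by
            rw [mul_assoc, ← mul_assoc u u _, ← mul_assoc]
        _ = (1 - q) * a * (1 - q) := by rw [hu_mul]
        _ = 0 := by rw [mul_sub, mul_one, sub_mul, one_mul, hqa, sub_self, zero_mul]; simp
    have hx0 : u * (1 - q) = 0 := by
      have := CStarRing.norm_star_mul_self (x := u * (1 - q))
      rw [hx, norm_zero] at this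
      have h2 : ‖u * (1 - q)‖ = 0 := by nlinarith [norm_nonneg (u * (1 - q))]
      exact norm_eq_zero.mp h2
    have := sub_eq_zero.mp (by rwa [mul_sub, mul_one] at hx0)
    exact this.symm
  have hqu : q * u = u := by
    have := congrArg star huq
    rwa [star_mul, hu_star, hq_star] at this
  -- q - a is positive with norm ≤ δ²
  have hqagen : q - a = star ((q - p) * q) * ((q - p) * q) := by
    have e1 : q * (q - p) = q - q*p := by rw [mul_sub, hq_idem]
    have e2 : (q - p) * q = q - p*q := by rw [sub_mul, hq_idem]
    have e3 : (q*p)*(p*q) = q*p*q := by rw [← mul_assoc, mul_assoc q p p, hp_idem]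
    rw [star_mul, star_sub, hq_star, hp_star, e1, e2, sub_mul, mul_sub, mul_sub,
      hq_idem, e3, ← mul_assoc, ha_def]
    abel
  have hqa_nonneg : 0 ≤ q - a := hqagen ▸ star_mul_self_nonneg _
  have hqa_norm : ‖q - a‖ ≤ δ^2 := by
    rw [hqagen, CStarRing.norm_star_mul_self]
    have h1 : ‖(q - p) * q‖ ≤ δ := by
      calc ‖(q - p) * q‖ ≤ ‖q - p‖ * ‖q‖ := norm_mul_le _ _
        _ ≤ δ * 1 := by
            refine mul_le_mul ?_ hqn (norm_nonneg _) hδ0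
            rwa [norm_sub_rev]
        _ = δ := mul_one δ
    calc ‖(q-p)*q‖ * ‖(q-p)*q‖ ≤ δ * δ :=
          mul_le_mul h1 h1 (norm_nonneg _) hδ0
      _ = δ^2 := (sq δ).symm
  have halg : ∀ (r t : ℝ), r ≤ t →
      (algebraMap ℝ (H →L[ℂ] H)) r ≤ algebraMap ℝ (H →L[ℂ] H) t := by
    intro r t h
    rw [← sub_nonneg, ← map_sub, Algebra.algebraMap_eq_smul_one]
    exact smul_nonneg (by linarith) zero_le_one
  have hqa_le : q - a ≤ algebraMap ℝ (H →L[ℂ] H) (δ^2) :=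
    le_trans (IsSelfAdjoint.le_algebraMap_norm_self (.of_nonneg hqa_nonneg))
      (halg _ _ hqa_norm)
  have hu_norm : ‖u‖ ≤ 1 := by
    have h1 : ‖u‖ * ‖u‖ = ‖a‖ := by
      rw [← CStarRing.norm_star_mul_self (x := u), hu_star, hu_mul]
    nlinarith [norm_nonneg u]
  have hu_le_one : u ≤ 1 := by
    refine le_trans (IsSelfAdjoint.le_algebraMap_norm_self hu_sa) ?_
    have := halg _ _ hu_norm
    rwa [map_one] at this
  have hu_le_q : u ≤ q := by
    have h1 := star_left_conjugate_le_conjugate hu_le_one q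
    rwa [hq_star, mul_one, hq_idem, hqu, huq] at h1
  -- w = sqrt u, used to show a ≤ u
  set w : H →L[ℂ] H := CFC.sqrt u with hw_def
  have hw_nonneg : 0 ≤ w := CFC.sqrt_nonneg u
  have hw_mul : w * w = u := CFC.sqrt_mul_sqrt_self u hu_nonneg
  have hw_star : star w = w := IsSelfAdjoint.of_nonneg hw_nonneg
  have hwq : w * q = w := by
    have hx : star (w * (1 - q)) * (w * (1 - q)) = 0 := by
      rw [star_mul, star_sub, star_one, hq_star, hw_star]
      calc (1 - q) * w * (w * (1 - q)) = (1 - q) * (w * w) * (1 - q) := by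
            rw [mul_assoc, ← mul_assoc w w _, ← mul_assoc]
        _ = (1 - q) * u * (1 - q) := by rw [hw_mul]
        _ = 0 := by rw [mul_sub, mul_one, sub_mul, one_mul, hqu, sub_self, zero_mul]; simp
    have hx0 : w * (1 - q) = 0 := by
      have := CStarRing.norm_star_mul_self (x := w * (1 - q))
      rw [hx, norm_zero] at this
      have h2 : ‖w * (1 - q)‖ = 0 := by nlinarith [norm_nonneg (w * (1 - q))]
      exact norm_eq_zero.mp h2
    exact (sub_eq_zero.mp (by rwa [mul_sub, mul_one] at hx0)).symm
  have hqw : q * w = w := by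
    have := congrArg star hwq
    rwa [star_mul, hw_star, hq_star] at this
  have hua_nonneg : 0 ≤ u - a := by
    have h0 := star_left_conjugate_nonneg (sub_nonneg.mpr hu_le_q) w
    have hwu_comm : w * u = u * w := by rw [← hw_mul, ← mul_assoc]
    have h1 : w * u * w = a := by rw [hwu_comm, mul_assoc, hw_mul, hu_mul]
    have h2 : w * q * w = u := by rw [hwq, hw_mul]
    have e : star w * (q - u) * w = u - a := by
      rw [hw_star, mul_sub, sub_mul, h2, h1]
    rwa [e] at h0
  have hqu_nonneg : 0 ≤ q - u := sub_nonneg.mpr hu_le_q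
  have hququ : (q - u) * (q - u) = (q - a) - ((u - a) + (u - a)) := by
    rw [mul_sub, sub_mul, sub_mul, hq_idem, hqu, huq, hu_mul]
    abel
  have hqu_sq_le : (q - u) * (q - u) ≤ q - a := by
    rw [hququ]
    exact sub_le_self _ (add_nonneg hua_nonneg hua_nonneg)
  have hqu_sq_nonneg : 0 ≤ (q - u) * (q - u) := by
    have := star_mul_self_nonneg (q - u)
    rwa [star_sub, hq_star, hu_star] at this
  have hqu_norm : ‖q - u‖ ≤ δ := by
    have h1 : ‖(q - u) * (q - u)‖ ≤ ‖q - a‖ :=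
      CStarAlgebra.norm_le_norm_of_nonneg_of_le hqu_sq_nonneg hqu_sq_le
    have h2 : ‖q - u‖ * ‖q - u‖ = ‖(q - u) * (q - u)‖ := by
      rw [← CStarRing.norm_star_mul_self (x := q - u), star_sub, hq_star, hu_star]
    nlinarith [norm_nonneg (q - u)]
  -- invertible element b = 1 - (q - a)
  have hqa_lt : ‖q - a‖ < 1 := lt_of_le_of_lt hqa_norm (by nlinarith)
  set β : (H →L[ℂ] H)ˣ := Units.oneSub (q - a) hqa_lt with hβ_def
  have hβ_val : (β : H →L[ℂ] H) = 1 - (q - a) := rfl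
  set s : H →L[ℂ] H := u + (1 - q) with hs_def
  have hs_mul : s * s = (β : H →L[ℂ] H) := by
    rw [hβ_val, hs_def]
    simp only [mul_sub, sub_mul, mul_add, add_mul, mul_one, one_mul, hu_mul, huq,
      hqu, hq_idem]
    abel
  have hs_star : star s = s := by
    rw [hs_def, star_add, hu_star, star_sub, star_one, hq_star]
  obtain ⟨r, hr_def⟩ : ∃ r' : H →L[ℂ] H, r' = (↑β⁻¹ : H →L[ℂ] H) * s := ⟨_, rfl⟩
  have hcom : s * (↑β⁻¹ : H →L[ℂ] H) = (↑β⁻¹ : H →L[ℂ] H) * s := by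
    have hc : Commute s (β : H →L[ℂ] H) := by
      show s * (β : H →L[ℂ] H) = (β : H →L[ℂ] H) * s
      rw [← hs_mul, mul_assoc]
    exact (hc.units_inv_right).eq
  have hrs : r * s = 1 := by
    rw [hr_def, mul_assoc, hs_mul, Units.inv_mul]
  have hsr : s * r = 1 := by
    rw [hr_def, ← mul_assoc, hcom, mul_assoc, hs_mul, Units.inv_mul]
  have hr_star : star r = r := by
    have h1 : star r * s = 1 := by
      have := congrArg star hsr
      rwa [star_mul, hs_star, star_one] at this
    calc star r = star r * (s * r) := by rw [hsr, mul_one]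
      _ = (star r * s) * r := by rw [mul_assoc]
      _ = r := by rw [h1, one_mul]
  have hqs : q * s = u := by
    rw [hs_def, mul_add, hqu, mul_sub, mul_one, hq_idem, sub_self, add_zero]
  have hsq : s * q = u := by
    rw [hs_def, add_mul, huq, sub_mul, one_mul, hq_idem, sub_self, add_zero]
  have hru : r * u = q := by
    rw [← hsq, ← mul_assoc, hrs, one_mul]
  have hur : u * r = q := by
    rw [← hqs, mul_assoc, hsr, mul_one]
  have hrq : r * q = q * r := by
    calc r * q = r * q * (s * r) := by rw [hsr, mul_one]
      _ = r * (q * s) * r := by rw [mul_assoc, ← mul_assoc q s r, ← mul_assoc]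
      _ = r * u * r := by rw [hqs]
      _ = q * r := by rw [hru]
  have hqppq : (q * p) * (p * q) = a := by
    rw [← mul_assoc, mul_assoc q p p, hp_idem, ha_def]
  obtain ⟨v, hv_def⟩ : ∃ v' : H →L[ℂ] H, v' = p * q * r := ⟨_, rfl⟩
  have hv_star : star v = r * (q * p) := by
    rw [hv_def, star_mul, star_mul, hp_star, hq_star, hr_star]
  have hva : adjoint v = r * (q * p) := by
    rw [← ContinuousLinearMap.star_eq_adjoint, hv_star]
  -- goal 1 : adjoint v * v = q
  have hg1 : adjoint v * v = q := by
    rw [hva, hv_def]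
    calc r * (q*p) * (p*q*r) = r * ((q*p) * ((p*q)*r)) := by rw [mul_assoc]
      _ = r * (((q*p)*(p*q))*r) := by rw [← mul_assoc (q*p)]
      _ = r * (a * r) := by rw [hqppq]
      _ = r * (u * (u * r)) := by rw [← hu_mul, mul_assoc]
      _ = r * (u * q) := by rw [hur]
      _ = r * u := by rw [huq]
      _ = q := hru
  -- operator identities for goal 2
  have hvq : v * q = v := by
    rw [hv_def]
    calc (p*q*r)*q = (p*q)*(r*q) := by rw [mul_assoc]
      _ = (p*q)*(q*r) := by rw [hrq]
      _ = ((p*q)*q)*r := by rw [← mul_assoc]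
      _ = (p*q)*r := by rw [mul_assoc p q q, hq_idem]
  have hpv : p * v = v := by
    rw [hv_def, ← mul_assoc, ← mul_assoc, hp_idem]
  have hfp : (v * adjoint v) * p = v * adjoint v := by
    have h1 : adjoint v * p = adjoint v := by
      rw [hva, mul_assoc, mul_assoc q p p, hp_idem]
    rw [mul_assoc, h1]
  have hpf : p * (v * adjoint v) = v * adjoint v := by rw [← mul_assoc, hpv]
  have hff : (v * adjoint v) * (v * adjoint v) = v * adjoint v := by
    calc (v * adjoint v) * (v * adjoint v) = v*(adjoint v*(v*adjoint v)) := by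
          rw [mul_assoc]
      _ = v*((adjoint v*v)*adjoint v) := by rw [← mul_assoc (adjoint v) v _]
      _ = v*(q*adjoint v) := by rw [hg1]
      _ = (v*q)*adjoint v := by rw [← mul_assoc]
      _ = v*adjoint v := by rw [hvq]
  have hg2 : v * adjoint v = p := by
    ext y
    have hkey : p y - (v * adjoint v) y = 0 := by
      set x : H := p y - (v * adjoint v) y with hx_def
      have hpx : p x = x := by
        rw [hx_def, map_sub, ← ContinuousLinearMap.mul_apply p p, hp_idem,
          ← ContinuousLinearMap.mul_apply p (v * adjoint v), hpf]
      have hfx : (v * adjoint v) x = 0 := by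
        rw [hx_def, map_sub, ← ContinuousLinearMap.mul_apply (v * adjoint v) p, hfp,
          ← ContinuousLinearMap.mul_apply (v * adjoint v) (v * adjoint v), hff,
          sub_self]
      have hvax : adjoint v x = 0 := by
        have h0 : (inner ℂ (adjoint v x) (adjoint v x) : ℂ) = 0 := by
          rw [ContinuousLinearMap.adjoint_inner_left v (adjoint v x) x,
            ← ContinuousLinearMap.mul_apply v (adjoint v) x, hfx, inner_zero_right]
        exact inner_self_eq_zero.mp h0
      have hqx : q x = 0 := by
        have h1 : r (q x) = 0 := by
          rw [hva] at hvax
          simp only [ContinuousLinearMap.mul_apply] at hvax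
          rwa [hpx] at hvax
        calc q x = (s * r) (q x) := by rw [hsr, ContinuousLinearMap.one_apply]
          _ = s (r (q x)) := ContinuousLinearMap.mul_apply s r (q x)
          _ = 0 := by rw [h1, map_zero]
      have hx_pq : x = (p - q) x := by
        rw [ContinuousLinearMap.sub_apply, hqx, sub_zero, hpx]
      have hxn : ‖x‖ ≤ δ * ‖x‖ := by
        calc ‖x‖ = ‖(p - q) x‖ := by rw [← hx_pq]
          _ ≤ ‖p - q‖ * ‖x‖ := (p - q).le_opNorm x
          _ ≤ δ * ‖x‖ := mul_le_mul_of_nonneg_right hdist (norm_nonneg x)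
      by_contra hne
      have hx0 : 0 < ‖x‖ := by
        rw [hx_def] at hne ⊢
        exact norm_pos_iff.mpr (sub_ne_zero.mpr fun h => hne (by rw [h, sub_self]))
      nlinarith
    exact (sub_eq_zero.mp hkey).symm
  -- goal 3
  have hg3 : p * q = v * CFC.sqrt (adjoint (p * q) * (p * q)) := by
    rw [hA, ← hu_def, hv_def]
    calc p*q = (p*q)*q := by rw [mul_assoc, hq_idem]
      _ = (p*q)*(r*u) := by rw [hru]
      _ = (p*q*r)*u := by rw [← mul_assoc]
  -- goal 4
  have hd : v - p*q = (p*q)*(r-1) := by rw [mul_sub, mul_one, hv_def]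
  have hstar4 : star (v - p*q) * (v - p*q) = (q-u)*(q-u) := by
    have e1 : (r-1)*u = q - u := by rw [sub_mul, one_mul, hru]
    have e2 : u*(r-1) = q - u := by rw [mul_sub, mul_one, hur]
    rw [hd, star_mul, star_sub, star_one, hr_star, star_mul, hq_star, hp_star]
    calc ((r-1)*(q*p))*((p*q)*(r-1))
        = (r-1)*((q*p)*((p*q)*(r-1))) := by rw [mul_assoc]
      _ = (r-1)*(((q*p)*(p*q))*(r-1)) := by rw [← mul_assoc (q*p)]
      _ = (r-1)*(a*(r-1)) := by rw [hqppq]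
      _ = (r-1)*(u*(u*(r-1))) := by rw [← hu_mul, mul_assoc]
      _ = (r-1)*(u*(q-u)) := by rw [e2]
      _ = ((r-1)*u)*(q-u) := by rw [← mul_assoc]
      _ = (q-u)*(q-u) := by rw [e1]
  have hg4 : ‖v - p*q‖ ≤ δ := by
    have hsq_norm : ‖(q-u)*(q-u)‖ = ‖q-u‖*‖q-u‖ := by
      nth_rewrite 1 [show q - u = star (q-u) by rw [star_sub, hq_star, hu_star]]
      exact CStarRing.norm_star_mul_self
    have h2 : ‖v - p*q‖ * ‖v - p*q‖ = ‖q-u‖ * ‖q-u‖ := by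
      rw [← CStarRing.norm_star_mul_self (x := v - p*q), hstar4, hsq_norm]
    nlinarith [norm_nonneg (v - p*q), norm_nonneg (q-u), hqu_norm]
  exact ⟨v, hg1, hg2, hg3, hg4⟩
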